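/- With μ ∈ ℂ, R a square root of μ² − 1, R ≠ 0, and |μ + R| < 1, the function G_{k,s} defined as the Green function with source at the origin (as in the piecewise formula with (−1/(4R))(μ+R) raised to modified absolute-value exponents) is square-summable over ℤ²: Σ_{k,s ∈ ℤ} |G_{k,s}|² < ∞. -/

import Mathlib

/-! In every branch the exponent of `μ + R` is at least `|k| + |s|`, so with `r = ‖μ + R‖ < 1` the
terms are dominated by `C r^(2(|k| + |s|))`, a product of two two-sided geometric series. -/

/-- The Green function with source at the origin for the discrete Laplacian. -/
noncomputable def greenFn (μ R : ℂ) (k s : ℤ) : ℂ :=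
  if (k = 0 ∧ 0 < s) ∨ (0 < k ∧ s = 0) then
    (-1 / (4 * R)) * (μ + R) ^ (|k + 1| + |s + 1|)
  else if (k = 0 ∧ s < 0) ∨ (k < 0 ∧ s = 0) then
    (-1 / (4 * R)) * (μ + R) ^ (|k - 1| + |s - 1|)
  else
    (-1 / (4 * R)) * (μ + R) ^ (|k| + |s|)

lemma norm_mul_zpow_le_of_le {𝕜 : Type*} [NormedDivisionRing 𝕜] (c : 𝕜) {z : 𝕜} (hz : ‖z‖ ≤ 1)
    {e : ℤ} {n : ℕ} (hn : (n : ℤ) ≤ e) : ‖c * z ^ e‖ ≤ ‖c‖ * ‖z‖ ^ n := by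
  lift e to ℕ using (Int.natCast_nonneg n).trans hn
  rw [zpow_natCast, norm_mul, norm_pow]
  exact mul_le_mul_of_nonneg_left (pow_le_pow_of_le_one (norm_nonneg z) hz (by exact_mod_cast hn))
    (norm_nonneg c)

lemma norm_greenFn_le {μ R : ℂ} (h : ‖μ + R‖ ≤ 1) (k s : ℤ) :
    ‖greenFn μ R k s‖ ≤ ‖-1 / (4 * R)‖ * ‖μ + R‖ ^ (k.natAbs + s.natAbs) := by
  unfold greenFn
  split_ifs <;> apply norm_mul_zpow_le_of_le _ h <;> simp only [Int.abs_eq_natAbs] <;> omega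

lemma summable_pow_natAbs_add_natAbs {r : ℝ} (h0 : 0 ≤ r) (h1 : r < 1) :
    Summable fun p : ℤ × ℤ => r ^ (p.1.natAbs + p.2.natAbs) := by
  have hℤ : Summable fun k : ℤ => r ^ k.natAbs :=
    .of_nat_of_neg (by simpa using summable_geometric_of_lt_one h0 h1)
      (by simpa using summable_geometric_of_lt_one h0 h1)
  simpa only [pow_add] using
    hℤ.mul_of_nonneg hℤ (fun _ => pow_nonneg h0 _) (fun _ => pow_nonneg h0 _)

theorem greenFn_square_summable_general (μ R : ℂ) (habs : ‖μ + R‖ < 1) :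
    Summable (fun p : ℤ × ℤ => ‖greenFn μ R p.1 p.2‖ ^ 2) := by
  set r := ‖μ + R‖
  set C := ‖(-1 : ℂ) / (4 * R)‖
  have hr2 : r ^ 2 < 1 := pow_lt_one₀ (norm_nonneg _) habs two_ne_zero
  refine .of_nonneg_of_le (fun _ => by positivity) (fun p => ?_)
    ((summable_pow_natAbs_add_natAbs (sq_nonneg r) hr2).mul_left (C ^ 2))
  calc ‖greenFn μ R p.1 p.2‖ ^ 2 ≤ (C * r ^ (p.1.natAbs + p.2.natAbs)) ^ 2 :=
        pow_le_pow_left₀ (norm_nonneg _) (norm_greenFn_le habs.le p.1 p.2) 2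
    _ = C ^ 2 * (r ^ 2) ^ (p.1.natAbs + p.2.natAbs) := by ring

/-- The Green function is square-summable over `ℤ²`. -/
theorem greenFn_square_summable (μ R : ℂ) (hR : R ^ 2 = μ ^ 2 - 1) (hR0 : R ≠ 0)
    (habs : ‖μ + R‖ < 1) :
    Summable (fun p : ℤ × ℤ => ‖greenFn μ R p.1 p.2‖ ^ 2) :=
  greenFn_square_summable_general μ R habs
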